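/- arXiv:1709.00723 — 2 statements merged into one kernel-verified Lean document; each statement's English description precedes it below -/
import Mathlib

section
/- Let δ ∈ (0, π), let s, t ∈ [0, ∞), and let λ ∈ ℂ be nonzero with |arg λ| ≤ π − δ. Then |s·λ + t| ≥ sin(δ/2)·(s·|λ| + t). -/
/-!
Write `σ = sin (δ / 2)`, so that `-cos δ = 2σ² - 1`. The angle condition says
`Re λ ≥ -cos δ · |λ|`, and expanding the square of the modulus gives
`|z + t|² ≥ (|z| - t)² + 4σ²|z|t ≥ σ²(|z| + t)²` for `z = sλ`, the last step because `σ² ≤ 1`.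
-/

open Real

lemma Real.neg_cos_le_cos_of_abs_le_pi_sub {δ θ : ℝ} (hδ : 0 ≤ δ) (hθ : |θ| ≤ π - δ) :
    -cos δ ≤ cos θ := by
  rw [← cos_pi_sub, ← cos_abs θ]
  exact cos_le_cos_of_nonneg_of_le_pi (abs_nonneg θ) (by linarith) hθ

lemma Real.neg_cos_eq_two_mul_sin_half_sq_sub_one (δ : ℝ) :
    -cos δ = 2 * sin (δ / 2) ^ 2 - 1 := by
  have h := cos_two_mul' (δ / 2)
  rw [mul_div_cancel₀ δ two_ne_zero] at h
  linarith [sin_sq_add_cos_sq (δ / 2)]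

lemma Complex.norm_add_ofReal_sq (z : ℂ) (t : ℝ) :
    ‖z + t‖ ^ 2 = ‖z‖ ^ 2 + 2 * t * z.re + t ^ 2 := by
  simp only [Complex.sq_norm, Complex.normSq_add, Complex.normSq_ofReal, Complex.conj_ofReal,
    Complex.re_mul_ofReal]
  ring

lemma Complex.sin_half_mul_norm_add_le_norm_add_ofReal {δ t : ℝ} {z : ℂ}
    (hz : -Real.cos δ * ‖z‖ ≤ z.re) (ht : 0 ≤ t) :
    Real.sin (δ / 2) * (‖z‖ + t) ≤ ‖z + t‖ := by
  set σ := Real.sin (δ / 2)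
  have hσ : σ ^ 2 ≤ 1 := Real.sin_sq_le_one _
  have hre : (2 * σ ^ 2 - 1) * ‖z‖ * t ≤ z.re * t := by
    rw [← neg_cos_eq_two_mul_sin_half_sq_sub_one]
    exact mul_le_mul_of_nonneg_right hz ht
  have hsq : (σ * (‖z‖ + t)) ^ 2 ≤ ‖z + t‖ ^ 2 := by
    rw [norm_add_ofReal_sq]
    nlinarith [mul_nonneg (sub_nonneg.2 hσ) (sq_nonneg (‖z‖ - t))]
  exact (le_abs_self _).trans (abs_le_of_sq_le_sq hsq (norm_nonneg _))

theorem elementary_sector_inequality_general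
    (δ : ℝ) (hδ : δ ∈ Set.Ioo (0 : ℝ) Real.pi)
    (s t : ℝ) (hs : 0 ≤ s) (ht : 0 ≤ t)
    (lam : ℂ) (harg : |lam.arg| ≤ Real.pi - δ) :
    Real.sin (δ / 2) * (s * ‖lam‖ + t)
      ≤ ‖(s : ℂ) * lam + (t : ℂ)‖ := by
  have hcos : -cos δ ≤ cos lam.arg := neg_cos_le_cos_of_abs_le_pi_sub hδ.1.le harg
  have hnorm : ‖(s : ℂ) * lam‖ = s * ‖lam‖ := by
    rw [norm_mul, Complex.norm_real, norm_of_nonneg hs]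
  have hsector : -cos δ * ‖(s : ℂ) * lam‖ ≤ ((s : ℂ) * lam).re := by
    rw [hnorm, Complex.re_ofReal_mul, ← Complex.norm_mul_cos_arg lam]
    nlinarith [mul_nonneg hs (norm_nonneg lam)]
  simpa only [hnorm] using Complex.sin_half_mul_norm_add_le_norm_add_ofReal hsector ht

/-- Let `δ ∈ (0, π)`, `s, t ∈ [0, ∞)`, and let `λ ∈ ℂ` be nonzero with
`|arg λ| ≤ π − δ`. Then `|s·λ + t| ≥ sin(δ/2)·(s·|λ| + t)`. -/
theorem elementary_sector_inequality
    (δ : ℝ) (hδ : δ ∈ Set.Ioo (0 : ℝ) Real.pi)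
    (s t : ℝ) (hs : 0 ≤ s) (ht : 0 ≤ t)
    (lam : ℂ) (hlam : lam ≠ 0) (harg : |lam.arg| ≤ Real.pi - δ) :
    Real.sin (δ / 2) * (s * ‖lam‖ + t)
      ≤ ‖(s : ℂ) * lam + (t : ℂ)‖ :=
  elementary_sector_inequality_general δ hδ s t hs ht lam harg
end

section
/- Assume that b satisfies the inf-sup condition: there is β₁ > 0 with sup over 0 ≠ v ∈ V of |b(v,q)|/‖v‖_V ≥ β₁‖q‖_Q for all q ∈ Q. Let u₀ ∈ H_σ, and let (u¹,p¹) and (u²,p²) be two solutions of the abstract non-stationary Stokes problem with the same initial value u₀. Then u¹(t) = u²(t) for all t ≥ 0, and p¹(t) = p²(t) for all t > 0. -/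
local notation "⟪" x ", " y "⟫" => @inner ℂ _ _ x y

/-!
The difference `w = u¹ - u²` is tested against itself: `w(t)` lies in `V_σ`, so the pressures
drop out and `d/dt ‖w‖² = -2 Re a(w, w) ≤ 0`. Hence `‖w‖` is nonincreasing from `w(0) = 0`, and
the velocities agree. Then so do their derivatives, the equations give `b(v, p¹ - p²) = 0` for
every `v`, and the inf-sup condition forces `p¹ = p²`.
-/

open Set Filter Topology

theorem antitoneOn_norm_of_inner_deriv_nonpos {F : Type*} [NormedAddCommGroup F]
    [InnerProductSpace ℝ F] {D : Set ℝ} (hD : Convex ℝ D) {f f' : ℝ → F}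
    (hf : ContinuousOn f D) (hf' : ∀ t ∈ interior D, HasDerivAt f (f' t) t)
    (hf'_nonpos : ∀ t ∈ interior D, inner ℝ (f t) (f' t) ≤ 0) :
    AntitoneOn (‖f ·‖) D := by
  have hsq : AntitoneOn (‖f ·‖ ^ 2) D :=
    antitoneOn_of_hasDerivWithinAt_nonpos hD (hf.norm.pow 2)
      (fun t ht => (hf' t ht).norm_sq.hasDerivWithinAt) fun t ht => by
        linarith [hf'_nonpos t ht]
  exact fun s hs t ht hst => (sq_le_sq₀ (norm_nonneg _) (norm_nonneg _)).1 (hsq hs ht hst)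

theorem eqOn_Ici_of_re_inner_deriv_sub_nonpos {H : Type*} [NormedAddCommGroup H]
    [InnerProductSpace ℂ H] {f g f' g' : ℝ → H}
    (hf : ContinuousOn f (Ici 0)) (hg : ContinuousOn g (Ici 0))
    (hf' : ∀ t, 0 < t → HasDerivAt f (f' t) t) (hg' : ∀ t, 0 < t → HasDerivAt g (g' t) t)
    (hdiss : ∀ t, 0 < t → (⟪f' t - g' t, f t - g t⟫).re ≤ 0) (h₀ : f 0 = g 0) :
    EqOn f g (Ici 0) := by
  -- its inner product is `Re ⟪·, ·⟫` definitionally, which is what `hdiss` bounds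
  let _ := InnerProductSpace.complexToReal (G := H)
  have hanti : AntitoneOn (fun t => ‖f t - g t‖) (Ici 0) := by
    refine antitoneOn_norm_of_inner_deriv_nonpos (f' := f' - g') (convex_Ici 0) (hf.sub hg) ?_ ?_
    · rw [interior_Ici]; exact fun t ht => (hf' t ht).sub (hg' t ht)
    · rw [interior_Ici]; exact fun t ht => (real_inner_comm _ _).trans_le (hdiss t ht)
  intro t ht
  simpa [h₀, sub_eq_zero] using hanti self_mem_Ici ht ht

theorem form_sub_left_of_isHermitian {V : Type*} [AddCommGroup V] [Module ℂ V]
    {a : V → V → ℂ} (ha_lin : ∀ u : V, IsLinearMap ℂ (a u))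
    (ha_herm : ∀ u v : V, a u v = starRingEnd ℂ (a v u)) (u u' v : V) :
    a (u - u') v = a u v - a u' v := by
  rw [ha_herm, (ha_lin v).map_sub, map_sub, ← ha_herm, ← ha_herm]

theorem inner_sub_eq_neg_form_sub {H V Q : Type*} [NormedAddCommGroup H]
    [InnerProductSpace ℂ H] [AddCommGroup V] [Module ℂ V] {ι : V → H} {a : V → V → ℂ}
    {b : V → Q → ℂ} (ha_lin : ∀ u : V, IsLinearMap ℂ (a u))
    (ha_herm : ∀ u v : V, a u v = starRingEnd ℂ (a v u))
    (hb_lin : ∀ q : Q, IsLinearMap ℂ fun v => b v q)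
    {ut₁ ut₂ : H} {u₁ u₂ : V} {p₁ p₂ : Q}
    (h₁ : ∀ v : V, ⟪ut₁, ι v⟫ + a u₁ v + b v p₁ = 0) (hσ₁ : ∀ q : Q, b u₁ q = 0)
    (h₂ : ∀ v : V, ⟪ut₂, ι v⟫ + a u₂ v + b v p₂ = 0) (hσ₂ : ∀ q : Q, b u₂ q = 0) :
    ⟪ut₁ - ut₂, ι (u₁ - u₂)⟫ = -a (u₁ - u₂) (u₁ - u₂) := by
  have hσ : ∀ q : Q, b (u₁ - u₂) q = 0 := fun q => by
    rw [(hb_lin q).map_sub, hσ₁, hσ₂, sub_zero]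
  have e₁ := h₁ (u₁ - u₂)
  have e₂ := h₂ (u₁ - u₂)
  rw [hσ, add_zero] at e₁ e₂
  rw [inner_sub_left, form_sub_left_of_isHermitian ha_lin ha_herm]
  linear_combination e₁ - e₂

theorem eq_of_forall_eq_of_infSup {V Q F : Type*} [Norm V] [NormedAddCommGroup Q]
    [NormedAddCommGroup F] {b : V → Q → F}
    (hb_add : ∀ (v : V) (q q' : Q), b v (q + q') = b v q + b v q')
    {β : ℝ} (hβ : 0 < β) (hb_infsup : ∀ q : Q, β * ‖q‖ ≤ ⨆ v : V, ‖b v q‖ / ‖v‖)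
    {p₁ p₂ : Q} (h : ∀ v : V, b v p₁ = b v p₂) : p₁ = p₂ := by
  have hb : ∀ v : V, b v (p₁ - p₂) = 0 := fun v =>
    ((AddMonoidHom.mk' (b v) (hb_add v)).map_sub p₁ p₂).trans (sub_eq_zero.2 (h v))
  have hle := hb_infsup (p₁ - p₂)
  simp only [hb, norm_zero, zero_div, Real.iSup_const_zero] at hle
  rw [← sub_eq_zero, ← norm_le_zero_iff]
  exact nonpos_of_mul_nonpos_right hle hβ

theorem abstract_stokes_uniqueness_general
    {H V Q : Type*}
    [NormedAddCommGroup H] [InnerProductSpace ℂ H]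
    [NormedAddCommGroup V] [InnerProductSpace ℂ V]
    [NormedAddCommGroup Q] [InnerProductSpace ℂ Q]
    (ι : V →L[ℂ] H) (hι_inj : Function.Injective ι)
    (a : V → V → ℂ)
    (ha_lin : ∀ u : V, IsLinearMap ℂ (a u))
    (ha_herm : ∀ u v : V, a u v = starRingEnd ℂ (a v u))
    (α : ℝ) (hα : 0 < α)
    (ha_coer : ∀ v : V, α * ‖v‖ ^ 2 ≤ (a v v).re)
    (b : V → Q → ℂ)
    (hb_linV : ∀ q : Q, IsLinearMap ℂ fun v => b v q)
    (hb_add : ∀ (v : V) (q q' : Q), b v (q + q') = b v q + b v q')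
    (β₁ : ℝ) (hβ₁ : 0 < β₁)
    (hb_infsup : ∀ q : Q, β₁ * ‖q‖ ≤ ⨆ v : V, ‖b v q‖ / ‖v‖)
    (u₀ : H)
    (u₁ : ℝ → H) (uV₁ : ℝ → V) (ut₁ : ℝ → H) (p₁ : ℝ → Q)
    (u₂ : ℝ → H) (uV₂ : ℝ → V) (ut₂ : ℝ → H) (p₂ : ℝ → Q)
    (hu₁c : ContinuousOn u₁ (Set.Ici 0)) (hu₁0 : u₁ 0 = u₀)
    (hu₁V : ∀ t : ℝ, 0 < t → ι (uV₁ t) = u₁ t)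
    (hu₁d : ∀ t : ℝ, 0 < t → HasDerivAt u₁ (ut₁ t) t)
    (heq₁ : ∀ t : ℝ, 0 < t → ∀ v : V, ⟪ut₁ t, ι v⟫ + a (uV₁ t) v + b v (p₁ t) = 0)
    (hσ₁ : ∀ t : ℝ, 0 < t → ∀ q : Q, b (uV₁ t) q = 0)
    (hu₂c : ContinuousOn u₂ (Set.Ici 0)) (hu₂0 : u₂ 0 = u₀)
    (hu₂V : ∀ t : ℝ, 0 < t → ι (uV₂ t) = u₂ t)
    (hu₂d : ∀ t : ℝ, 0 < t → HasDerivAt u₂ (ut₂ t) t)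
    (heq₂ : ∀ t : ℝ, 0 < t → ∀ v : V, ⟪ut₂ t, ι v⟫ + a (uV₂ t) v + b v (p₂ t) = 0)
    (hσ₂ : ∀ t : ℝ, 0 < t → ∀ q : Q, b (uV₂ t) q = 0) :
    (∀ t : ℝ, 0 ≤ t → u₁ t = u₂ t) ∧ (∀ t : ℝ, 0 < t → p₁ t = p₂ t) := by
  have hu : EqOn u₁ u₂ (Ici 0) := by
    refine eqOn_Ici_of_re_inner_deriv_sub_nonpos hu₁c hu₂c hu₁d hu₂d (fun t ht => ?_)
      (hu₁0.trans hu₂0.symm)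
    rw [← hu₁V t ht, ← hu₂V t ht, ← map_sub,
      inner_sub_eq_neg_form_sub ha_lin ha_herm hb_linV (heq₁ t ht) (hσ₁ t ht) (heq₂ t ht)
        (hσ₂ t ht), Complex.neg_re, neg_nonpos]
    exact (mul_nonneg hα.le (sq_nonneg _)).trans (ha_coer _)
  refine ⟨fun t ht => hu ht, fun t ht => ?_⟩
  have hV : uV₁ t = uV₂ t := hι_inj (by rw [hu₁V t ht, hu₂V t ht, hu ht.le])
  have hu_nhds : u₁ =ᶠ[𝓝 t] u₂ := by
    filter_upwards [Ioi_mem_nhds ht] with s hs using hu (mem_Ici.2 hs.le)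
  have hut : ut₁ t = ut₂ t := (hu₁d t ht).unique ((hu₂d t ht).congr_of_eventuallyEq hu_nhds)
  refine eq_of_forall_eq_of_infSup hb_add hβ₁ hb_infsup fun v => ?_
  have e₁ := heq₁ t ht v
  rw [hV, hut] at e₁
  linear_combination e₁ - heq₂ t ht v

/-- If `b` satisfies the inf-sup condition with constant `β₁ > 0`, then two
solutions of the abstract non-stationary Stokes problem with the same initial value `u₀ ∈ H_σ`
coincide: `u¹(t) = u²(t)` for all `t ≥ 0` and `p¹(t) = p²(t)` for all `t > 0`. -/
theorem abstract_stokes_uniqueness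
    {H V Q : Type*}
    [NormedAddCommGroup H] [InnerProductSpace ℂ H] [CompleteSpace H]
    [NormedAddCommGroup V] [InnerProductSpace ℂ V] [CompleteSpace V]
    [NormedAddCommGroup Q] [InnerProductSpace ℂ Q] [CompleteSpace Q]
    (ι : V →L[ℂ] H) (hι_inj : Function.Injective ι) (hι_dense : DenseRange ι)
    (c : ℝ) (hc : 0 < c) (hιb : ∀ v : V, ‖ι v‖ ≤ c * ‖v‖)
    (a : V → V → ℂ) (Ca : ℝ)
    (ha_lin : ∀ u : V, IsLinearMap ℂ (a u))
    (ha_herm : ∀ u v : V, a u v = starRingEnd ℂ (a v u))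
    (ha_bdd : ∀ u v : V, ‖a u v‖ ≤ Ca * ‖u‖ * ‖v‖)
    (α : ℝ) (hα : 0 < α)
    (ha_coer : ∀ v : V, α * ‖v‖ ^ 2 ≤ (a v v).re)
    (b : V → Q → ℂ) (Cb : ℝ)
    (hb_linV : ∀ q : Q, IsLinearMap ℂ fun v => b v q)
    (hb_add : ∀ (v : V) (q q' : Q), b v (q + q') = b v q + b v q')
    (hb_smul : ∀ (v : V) (s : ℂ) (q : Q), b v (s • q) = starRingEnd ℂ s * b v q)
    (hb_bdd : ∀ (v : V) (q : Q), ‖b v q‖ ≤ Cb * ‖v‖ * ‖q‖)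
    (β₁ : ℝ) (hβ₁ : 0 < β₁)
    (hb_infsup : ∀ q : Q, β₁ * ‖q‖ ≤ ⨆ v : V, ‖b v q‖ / ‖v‖)
    (u₀ : H) (hu₀ : u₀ ∈ closure ((ι : V → H) '' {v' : V | ∀ q : Q, b v' q = 0}))
    (u₁ : ℝ → H) (uV₁ : ℝ → V) (ut₁ : ℝ → H) (p₁ : ℝ → Q)
    (u₂ : ℝ → H) (uV₂ : ℝ → V) (ut₂ : ℝ → H) (p₂ : ℝ → Q)
    (hu₁c : ContinuousOn u₁ (Set.Ici 0)) (hu₁0 : u₁ 0 = u₀)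
    (hu₁V : ∀ t : ℝ, 0 < t → ι (uV₁ t) = u₁ t)
    (hu₁d : ∀ t : ℝ, 0 < t → HasDerivAt u₁ (ut₁ t) t)
    (heq₁ : ∀ t : ℝ, 0 < t → ∀ v : V, ⟪ut₁ t, ι v⟫ + a (uV₁ t) v + b v (p₁ t) = 0)
    (hσ₁ : ∀ t : ℝ, 0 < t → ∀ q : Q, b (uV₁ t) q = 0)
    (hu₂c : ContinuousOn u₂ (Set.Ici 0)) (hu₂0 : u₂ 0 = u₀)
    (hu₂V : ∀ t : ℝ, 0 < t → ι (uV₂ t) = u₂ t)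
    (hu₂d : ∀ t : ℝ, 0 < t → HasDerivAt u₂ (ut₂ t) t)
    (heq₂ : ∀ t : ℝ, 0 < t → ∀ v : V, ⟪ut₂ t, ι v⟫ + a (uV₂ t) v + b v (p₂ t) = 0)
    (hσ₂ : ∀ t : ℝ, 0 < t → ∀ q : Q, b (uV₂ t) q = 0) :
    (∀ t : ℝ, 0 ≤ t → u₁ t = u₂ t) ∧ (∀ t : ℝ, 0 < t → p₁ t = p₂ t) :=
  abstract_stokes_uniqueness_general ι hι_inj a ha_lin ha_herm α hα ha_coer b hb_linV hb_add β₁ hβ₁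
    hb_infsup u₀ u₁ uV₁ ut₁ p₁ u₂ uV₂ ut₂ p₂ hu₁c hu₁0 hu₁V hu₁d heq₁ hσ₁ hu₂c hu₂0 hu₂V hu₂d heq₂
    hσ₂
end
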